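/- arXiv:2302.06777 — 2 statements merged into one kernel-verified Lean document; each statement's English description precedes it below -/
import Mathlib

section
/- Let T be a bounded linear operator on a complex Hilbert space H, and set λ₁ = sup over θ ∈ ℝ of ∫₀¹ ‖(1−t)e^{iθ}T + t e^{−iθ}T*‖ dt and λ₂ = sup over θ ∈ ℝ of ∫₀¹ ‖(1−t)e^{−iθ}T* − t e^{iθ}T‖ dt. Then ω(T) ≤ min{λ₁, λ₂} ≤ ‖T‖. -/
/-!
For a unit vector `x` write `z = ⟪T x, x⟫ = |z| e^{i arg z}`. With `θ = arg z` the two endpoints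
`e^{iθ} T` and `e^{-iθ} T*` of the segment defining `λ₁` both send `x` to `⟪· x, x⟫ = |z|`, so every
operator `S` on that segment has `⟪S x, x⟫ = |z|` and hence `‖S‖ ≥ |z|`; integrating in `t` and taking
the supremum over `θ` gives `|z| ≤ λ₁`. For `λ₂` the choice `θ = arg z - π/2` makes both endpoints
`e^{-iθ} T*` and `-e^{iθ} T` send `x` to `-i|z|`. Conversely every operator on these segments has norm
at most `‖T‖ = ‖T*‖` by the triangle inequality.
-/

open ContinuousLinearMap

/-- The numerical radius of a bounded operator on a complex inner product space:
`ω(T) = sup { |⟨Tx, x⟩| : ‖x‖ = 1 }`. -/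
noncomputable def numRadius {E : Type*} [NormedAddCommGroup E] [InnerProductSpace ℂ E]
    (T : E →L[ℂ] E) : ℝ :=
  ⨆ x : { x : E // ‖x‖ = 1 }, ‖(inner ℂ (T x) (x : E) : ℂ)‖

open Complex ComplexConjugate Set

section Segment

variable {F : Type*} [NormedAddCommGroup F] [NormedSpace ℝ F]

lemma norm_segment_le {a b : F} {C t : ℝ} (ha : ‖a‖ ≤ C) (hb : ‖b‖ ≤ C) (ht : t ∈ Icc (0 : ℝ) 1) :
    ‖(1 - t) • a + t • b‖ ≤ C := by
  obtain ⟨ht₀, ht₁⟩ := ht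
  calc ‖(1 - t) • a + t • b‖ ≤ (1 - t) * ‖a‖ + t * ‖b‖ := by
        refine (norm_add_le _ _).trans_eq ?_
        rw [norm_smul, norm_smul, Real.norm_of_nonneg (sub_nonneg.2 ht₁), Real.norm_of_nonneg ht₀]
    _ ≤ (1 - t) * C + t * C := by gcongr
    _ = C := by ring

lemma integral_norm_segment_le {a b : F} {C : ℝ} (ha : ‖a‖ ≤ C) (hb : ‖b‖ ≤ C) :
    ∫ t in (0 : ℝ)..1, ‖(1 - t) • a + t • b‖ ≤ C := by
  have h := intervalIntegral.norm_integral_le_of_norm_le_const (a := (0 : ℝ)) (b := 1)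
    (f := fun t ↦ ‖(1 - t) • a + t • b‖) fun t ht ↦ by
      rw [norm_norm]
      exact norm_segment_le ha hb (Ioc_subset_Icc_self (uIoc_of_le (zero_le_one (α := ℝ)) ▸ ht))
  simpa using (le_abs_self _).trans h

lemma le_integral_norm_segment {a b : F} {c : ℝ}
    (h : ∀ t ∈ Icc (0 : ℝ) 1, c ≤ ‖(1 - t) • a + t • b‖) :
    c ≤ ∫ t in (0 : ℝ)..1, ‖(1 - t) • a + t • b‖ := by
  simpa using intervalIntegral.integral_mono_on zero_le_one
    (intervalIntegrable_const (μ := MeasureTheory.volume))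
    ((by fun_prop : Continuous fun t : ℝ ↦ ‖(1 - t) • a + t • b‖).intervalIntegrable 0 1) h

lemma iSup_integral_norm_segment_le {a b : ℝ → F} {C : ℝ} (ha : ∀ θ, ‖a θ‖ ≤ C)
    (hb : ∀ θ, ‖b θ‖ ≤ C) : ⨆ θ, ∫ t in (0 : ℝ)..1, ‖(1 - t) • a θ + t • b θ‖ ≤ C :=
  ciSup_le fun θ ↦ integral_norm_segment_le (ha θ) (hb θ)

lemma le_iSup_integral_norm_segment {a b : ℝ → F} {C c : ℝ} (ha : ∀ θ, ‖a θ‖ ≤ C)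
    (hb : ∀ θ, ‖b θ‖ ≤ C) (θ : ℝ) (h : ∀ t ∈ Icc (0 : ℝ) 1, c ≤ ‖(1 - t) • a θ + t • b θ‖) :
    c ≤ ⨆ θ, ∫ t in (0 : ℝ)..1, ‖(1 - t) • a θ + t • b θ‖ :=
  le_ciSup_of_le ⟨C, forall_mem_range.2 fun θ ↦ integral_norm_segment_le (ha θ) (hb θ)⟩ θ
    (le_integral_norm_segment h)

end Segment

lemma exp_neg_arg_mul_I_mul (z : ℂ) : exp (-(arg z * I)) * z = ‖z‖ := by
  nth_rw 2 [← norm_mul_exp_arg_mul_I z]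
  rw [mul_left_comm, ← exp_add, neg_add_cancel, exp_zero, mul_one]

lemma exp_neg_arg_sub_pi_div_two_mul_I_mul (z : ℂ) :
    exp (-(↑(arg z - Real.pi / 2) * I)) * z = I * ‖z‖ := by
  rw [show -(↑(arg z - Real.pi / 2) * I) = ↑Real.pi / 2 * I + -(arg z * I) by push_cast; ring,
    exp_add, exp_pi_div_two_mul_I, mul_assoc, exp_neg_arg_mul_I_mul]

lemma conj_exp_ofReal_mul_I (θ : ℝ) : conj (exp (θ * I)) = exp (-(θ * I)) := by
  rw [← exp_conj, map_mul, conj_ofReal, conj_I, mul_neg]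

section Inner

variable {E : Type*} [NormedAddCommGroup E] [InnerProductSpace ℂ E]

lemma norm_inner_apply_self_le (S : E →L[ℂ] E) {x : E} (hx : ‖x‖ = 1) :
    ‖inner ℂ (S x) x‖ ≤ ‖S‖ := by
  simpa [hx] using (norm_inner_le_norm (𝕜 := ℂ) (S x) x).trans
    (mul_le_mul_of_nonneg_right (S.le_opNorm x) (norm_nonneg x))

lemma numRadius_le {T : E →L[ℂ] E} {c : ℝ} (hc : 0 ≤ c)
    (h : ∀ x : E, ‖x‖ = 1 → ‖inner ℂ (T x) x‖ ≤ c) : numRadius T ≤ c :=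
  Real.iSup_le (fun x ↦ h x x.2) hc

lemma norm_inner_apply_self_le_norm_segment {A B : E →L[ℂ] E} {x : E} (hx : ‖x‖ = 1)
    (hAB : inner ℂ (A x) x = inner ℂ (B x) x) (t : ℝ) :
    ‖inner ℂ (A x) x‖ ≤ ‖(1 - t) • A + t • B‖ := by
  have h : inner ℂ (((1 - t) • A + t • B) x) x = inner ℂ (A x) x := by
    simp only [add_apply, smul_apply, inner_add_left, ← coe_smul, inner_smul_left, conj_ofReal, hAB]
    push_cast
    ring
  simpa only [h] using norm_inner_apply_self_le ((1 - t) • A + t • B) hx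

lemma inner_smul_apply_self (c : ℂ) (T : E →L[ℂ] E) (x : E) :
    inner ℂ ((c • T) x) x = conj c * inner ℂ (T x) x := by
  rw [smul_apply, inner_smul_left]

lemma inner_smul_adjoint_apply_self [CompleteSpace E] (c : ℂ) (T : E →L[ℂ] E) (x : E) :
    inner ℂ ((c • adjoint T) x) x = conj (c * inner ℂ (T x) x) := by
  rw [smul_apply, inner_smul_left, adjoint_inner_left, ← inner_conj_symm, map_mul]

end Inner

section Rotation

variable {E : Type*} [NormedAddCommGroup E] [InnerProductSpace ℂ E] [CompleteSpace E]

lemma norm_inner_apply_self_le_norm_segment_exp_arg (T : E →L[ℂ] E) {x : E} (hx : ‖x‖ = 1)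
    (t : ℝ) : ‖inner ℂ (T x) x‖ ≤
      ‖(1 - t) • (exp (arg (inner ℂ (T x) x) * I) • T) +
        t • (exp (-(arg (inner ℂ (T x) x) * I)) • adjoint T)‖ := by
  set z := inner ℂ (T x) x
  have hA : inner ℂ ((exp (arg z * I) • T) x) x = ‖z‖ := by
    rw [inner_smul_apply_self, conj_exp_ofReal_mul_I, exp_neg_arg_mul_I_mul]
  have hB : inner ℂ ((exp (-(arg z * I)) • adjoint T) x) x = ‖z‖ := by
    rw [inner_smul_adjoint_apply_self, exp_neg_arg_mul_I_mul, conj_ofReal]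
  have h := norm_inner_apply_self_le_norm_segment hx (hA.trans hB.symm) t
  rwa [hA, norm_real, norm_norm] at h

lemma norm_inner_apply_self_le_norm_segment_exp_arg_sub_pi_div_two (T : E →L[ℂ] E) {x : E}
    (hx : ‖x‖ = 1) (t : ℝ) : ‖inner ℂ (T x) x‖ ≤
      ‖(1 - t) • (exp (-(↑(arg (inner ℂ (T x) x) - Real.pi / 2) * I)) • adjoint T) +
        t • (exp (↑(arg (inner ℂ (T x) x) - Real.pi / 2) * I) • -T)‖ := by
  set z := inner ℂ (T x) x
  set θ := arg z - Real.pi / 2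
  have hA : inner ℂ ((exp (-(θ * I)) • adjoint T) x) x = -I * ‖z‖ := by
    rw [inner_smul_adjoint_apply_self, exp_neg_arg_sub_pi_div_two_mul_I_mul, map_mul, conj_I,
      conj_ofReal]
  have hB : inner ℂ ((exp (θ * I) • -T) x) x = -I * ‖z‖ := by
    rw [smul_neg, neg_apply, inner_neg_left, inner_smul_apply_self, conj_exp_ofReal_mul_I,
      exp_neg_arg_sub_pi_div_two_mul_I_mul, neg_mul]
  have h := norm_inner_apply_self_le_norm_segment hx (hA.trans hB.symm) t
  rwa [hA, norm_mul, norm_neg, norm_I, one_mul, norm_real, norm_norm] at h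

end Rotation

/-- With `λ₁ = sup_θ ∫₀¹ ‖(1−t)e^{iθ}T + t e^{−iθ}T*‖ dt` and
`λ₂ = sup_θ ∫₀¹ ‖(1−t)e^{−iθ}T* − t e^{iθ}T‖ dt`, one has `ω(T) ≤ min{λ₁, λ₂} ≤ ‖T‖`. -/
theorem stmt_5 {H : Type*} [NormedAddCommGroup H] [InnerProductSpace ℂ H] [CompleteSpace H]
    (T : H →L[ℂ] H) (l1 l2 : ℝ)
    (hl1 : l1 = ⨆ θ : ℝ, ∫ t in (0:ℝ)..1,
      ‖(((1 - t : ℝ) : ℂ) * Complex.exp (θ * Complex.I)) • T +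
        (((t : ℝ) : ℂ) * Complex.exp (-(θ * Complex.I))) • adjoint T‖)
    (hl2 : l2 = ⨆ θ : ℝ, ∫ t in (0:ℝ)..1,
      ‖(((1 - t : ℝ) : ℂ) * Complex.exp (-(θ * Complex.I))) • adjoint T -
        (((t : ℝ) : ℂ) * Complex.exp (θ * Complex.I)) • T‖) :
    numRadius T ≤ min l1 l2 ∧ min l1 l2 ≤ ‖T‖ := by
  simp only [mul_smul, coe_smul, sub_eq_add_neg (G := H →L[ℂ] H), ← smul_neg] at hl1 hl2
  have hnorm : ∀ (θ : ℝ) (S : H →L[ℂ] H), ‖S‖ = ‖T‖ →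
      ‖exp (θ * I) • S‖ ≤ ‖T‖ ∧ ‖exp (-(θ * I)) • S‖ ≤ ‖T‖ := fun θ S hS ↦ by
    simp [norm_smul, norm_exp, hS]
  have hT : ‖adjoint T‖ = ‖T‖ := adjoint.norm_map T
  have hnegT : ‖-T‖ = ‖T‖ := norm_neg T
  have ha₁ θ := (hnorm θ T rfl).1
  have hb₁ θ := (hnorm θ _ hT).2
  have ha₂ θ := (hnorm θ _ hT).2
  have hb₂ θ := (hnorm θ _ hnegT).1
  have hl1T : l1 ≤ ‖T‖ := hl1 ▸ iSup_integral_norm_segment_le ha₁ hb₁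
  refine ⟨numRadius_le (le_min ?_ ?_) fun x hx ↦ le_min ?_ ?_, (min_le_left _ _).trans hl1T⟩
  · exact hl1 ▸ le_iSup_integral_norm_segment ha₁ hb₁ 0 fun t _ ↦ norm_nonneg _
  · exact hl2 ▸ le_iSup_integral_norm_segment ha₂ hb₂ 0 fun t _ ↦ norm_nonneg _
  · exact hl1 ▸ le_iSup_integral_norm_segment ha₁ hb₁ _ fun t _ ↦
      norm_inner_apply_self_le_norm_segment_exp_arg T hx t
  · exact hl2 ▸ le_iSup_integral_norm_segment ha₂ hb₂ _ fun t _ ↦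
      norm_inner_apply_self_le_norm_segment_exp_arg_sub_pi_div_two T hx t
end

section
/- Let T be a bounded linear operator on a complex Hilbert space H. Then (1/2)ω(T) ≤ ∫₀¹ ω((1−t)T + tT*) dt and (1/2)ω(T) ≤ ∫₀¹ ω((1−t)T* − tT) dt. -/
/-!
The numerical radius `ω` is a seminorm on `B(H)` with `ω(T*) = ω(T)`. Hence, by the reverse
triangle inequality, `ω((1-t)A + tB) ≥ |(1-t)ω(A) - tω(B)| = |1-2t| ω(A)` whenever
`ω(B) = ω(A)`, and `∫₀¹ |1-2t| dt = 1/2`. Take `(A, B) = (T, T*)` and `(T*, -T)`.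
-/

open ContinuousLinearMap

theorem integral_abs_one_sub_two_mul : ∫ t in (0 : ℝ)..1, |1 - 2 * t| = 1 / 2 := by
  have hcont : Continuous fun u : ℝ ↦ |u| := continuous_abs
  have h01 : ∫ u in (0 : ℝ)..1, |u| = 1 / 2 := by
    rw [intervalIntegral.integral_congr fun u hu ↦ abs_of_nonneg (by
      rw [Set.uIcc_of_le zero_le_one] at hu; exact hu.1), integral_id]
    norm_num
  have hneg : ∫ u in (-1 : ℝ)..0, |u| = 1 / 2 := by
    have h := intervalIntegral.integral_comp_neg (a := 0) (b := 1) (fun u : ℝ ↦ |u|)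
    simp only [abs_neg, neg_zero] at h
    rw [← h, h01]
  rw [intervalIntegral.integral_comp_sub_mul (fun u ↦ |u|) two_ne_zero,
    ← intervalIntegral.integral_add_adjacent_intervals (b := 0) (hcont.intervalIntegrable _ _)
      (hcont.intervalIntegrable _ _)]
  norm_num [h01, hneg]

theorem half_mul_le_integral_of_abs_one_sub_two_mul_mul_le {g : ℝ → ℝ}
    (hg : IntervalIntegrable g MeasureTheory.volume 0 1) {c : ℝ}
    (h : ∀ t ∈ Set.Icc (0 : ℝ) 1, |1 - 2 * t| * c ≤ g t) :
    1 / 2 * c ≤ ∫ t in (0 : ℝ)..1, g t := by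
  have hcont : Continuous fun t : ℝ ↦ |1 - 2 * t| * c := by fun_prop
  calc 1 / 2 * c = ∫ t in (0 : ℝ)..1, |1 - 2 * t| * c := by
        rw [intervalIntegral.integral_mul_const, integral_abs_one_sub_two_mul]
    _ ≤ ∫ t in (0 : ℝ)..1, g t :=
        intervalIntegral.integral_mono_on zero_le_one (hcont.intervalIntegrable _ _) hg h

open scoped InnerProductSpace

section NumericalRadius

variable {E : Type*} [NormedAddCommGroup E] [InnerProductSpace ℂ E]

theorem norm_inner_apply_self_le_opNorm (T : E →L[ℂ] E) {x : E} (hx : ‖x‖ = 1) :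
    ‖⟪T x, x⟫_ℂ‖ ≤ ‖T‖ :=
  calc ‖⟪T x, x⟫_ℂ‖ ≤ ‖T x‖ * ‖x‖ := norm_inner_le_norm _ _
    _ ≤ ‖T‖ * ‖x‖ * ‖x‖ := by gcongr; exact T.le_opNorm x
    _ = ‖T‖ := by rw [hx, mul_one, mul_one]

theorem norm_inner_apply_self_le_numRadius (T : E →L[ℂ] E) {x : E} (hx : ‖x‖ = 1) :
    ‖⟪T x, x⟫_ℂ‖ ≤ numRadius T :=
  le_ciSup (f := fun x : {x : E // ‖x‖ = 1} ↦ ‖⟪T x, x⟫_ℂ‖)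
    ⟨‖T‖, by rintro _ ⟨x, rfl⟩; exact norm_inner_apply_self_le_opNorm T x.2⟩ ⟨x, hx⟩

theorem numRadius_nonneg (T : E →L[ℂ] E) : 0 ≤ numRadius T :=
  Real.iSup_nonneg fun _ ↦ norm_nonneg _

theorem numRadius_le_of_forall_le (T : E →L[ℂ] E) {c : ℝ} (hc : 0 ≤ c)
    (h : ∀ x : E, ‖x‖ = 1 → ‖⟪T x, x⟫_ℂ‖ ≤ c) : numRadius T ≤ c :=
  Real.iSup_le (fun x ↦ h x x.2) hc

theorem numRadius_le_opNorm (T : E →L[ℂ] E) : numRadius T ≤ ‖T‖ :=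
  numRadius_le_of_forall_le T (norm_nonneg T) fun _ ↦ norm_inner_apply_self_le_opNorm T

theorem numRadius_add_le (A B : E →L[ℂ] E) : numRadius (A + B) ≤ numRadius A + numRadius B := by
  refine numRadius_le_of_forall_le _ (add_nonneg (numRadius_nonneg A) (numRadius_nonneg B))
    fun x hx ↦ ?_
  rw [add_apply, inner_add_left]
  exact (norm_add_le _ _).trans (add_le_add (norm_inner_apply_self_le_numRadius A hx)
    (norm_inner_apply_self_le_numRadius B hx))

theorem numRadius_smul (c : ℂ) (T : E →L[ℂ] E) : numRadius (c • T) = ‖c‖ * numRadius T := by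
  simp only [numRadius, Real.mul_iSup_of_nonneg (norm_nonneg c), smul_apply, inner_smul_left,
    norm_mul, Complex.norm_conj]

noncomputable def numRadiusSeminorm : Seminorm ℂ (E →L[ℂ] E) :=
  Seminorm.of numRadius numRadius_add_le numRadius_smul

@[simp]
theorem numRadiusSeminorm_apply (T : E →L[ℂ] E) : numRadiusSeminorm T = numRadius T := rfl

theorem numRadius_neg (T : E →L[ℂ] E) : numRadius (-T) = numRadius T :=
  map_neg_eq_map numRadiusSeminorm T

theorem lipschitzWith_numRadius : LipschitzWith 1 (numRadius : (E →L[ℂ] E) → ℝ) :=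
  LipschitzWith.of_dist_le_mul fun A B ↦ by
    rw [NNReal.coe_one, one_mul, Real.dist_eq, dist_eq_norm]
    exact (abs_sub_map_le_sub numRadiusSeminorm A B).trans (numRadius_le_opNorm (A - B))

theorem numRadius_adjoint [CompleteSpace E] (T : E →L[ℂ] E) :
    numRadius (adjoint T) = numRadius T := by
  simp only [numRadius, adjoint_inner_left, ← inner_conj_symm (T _), Complex.norm_conj]

theorem abs_one_sub_two_mul_mul_numRadius_le (A B : E →L[ℂ] E) (hBA : numRadius B = numRadius A)
    {t : ℝ} (ht : t ∈ Set.Icc (0 : ℝ) 1) :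
    |1 - 2 * t| * numRadius A ≤ numRadius (((1 - t : ℝ) : ℂ) • A + ((t : ℝ) : ℂ) • B) := by
  have h := abs_sub_map_le_sub numRadiusSeminorm (((1 - t : ℝ) : ℂ) • A) (-(((t : ℝ) : ℂ) • B))
  rw [map_neg_eq_map, map_smul_eq_mul, map_smul_eq_mul, sub_neg_eq_add] at h
  simp only [numRadiusSeminorm_apply, Complex.norm_real, Real.norm_eq_abs,
    abs_of_nonneg ht.1, abs_of_nonneg (sub_nonneg.2 ht.2), hBA] at h
  rwa [← sub_mul, sub_sub, ← two_mul, abs_mul, abs_of_nonneg (numRadius_nonneg A)] at h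

theorem half_mul_numRadius_le_integral (A B : E →L[ℂ] E) (hBA : numRadius B = numRadius A) :
    1 / 2 * numRadius A ≤
      ∫ t in (0 : ℝ)..1, numRadius (((1 - t : ℝ) : ℂ) • A + ((t : ℝ) : ℂ) • B) := by
  have hcont : Continuous fun t : ℝ ↦ numRadius (((1 - t : ℝ) : ℂ) • A + ((t : ℝ) : ℂ) • B) :=
    lipschitzWith_numRadius.continuous.comp (by fun_prop)
  exact half_mul_le_integral_of_abs_one_sub_two_mul_mul_le (hcont.intervalIntegrable _ _)
    fun t ht ↦ abs_one_sub_two_mul_mul_numRadius_le A B hBA ht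

end NumericalRadius

/-- `(1/2)ω(T) ≤ ∫₀¹ ω((1−t)T + tT*) dt` and `(1/2)ω(T) ≤ ∫₀¹ ω((1−t)T* − tT) dt`. -/
theorem stmt_6 {H : Type*} [NormedAddCommGroup H] [InnerProductSpace ℂ H] [CompleteSpace H]
    (T : H →L[ℂ] H) :
    (1 / 2 : ℝ) * numRadius T ≤
        (∫ t in (0:ℝ)..1, numRadius (((1 - t : ℝ) : ℂ) • T + ((t : ℝ) : ℂ) • adjoint T)) ∧
      (1 / 2 : ℝ) * numRadius T ≤
        (∫ t in (0:ℝ)..1, numRadius (((1 - t : ℝ) : ℂ) • adjoint T - ((t : ℝ) : ℂ) • T)) := by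
  refine ⟨half_mul_numRadius_le_integral T (adjoint T) (numRadius_adjoint T), ?_⟩
  have h := half_mul_numRadius_le_integral (adjoint T) (-T)
    (by rw [numRadius_neg, numRadius_adjoint])
  simpa only [numRadius_adjoint, smul_neg, ← sub_eq_add_neg] using h
end
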